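/- For all 0 < k < 2 and J > 0 there exists M₀ ∈ [0,∞) such that for every M > M₀ the strict inequality I^k_{M,J} < M holds. -/

import Mathlib

open MeasureTheory Real Filter Topology
open scoped ENNReal

noncomputable section

/-- Euclidean 3-space. -/
abbrev E3 := EuclideanSpace ℝ (Fin 3)

/-- `φ` belongs to (a C¹ surrogate of) the space `D¹(ℝ³)`: it is continuously
differentiable, its gradient is square integrable and it vanishes at infinity in
the sense that `{|φ| > a}` has finite measure for every `a > 0`. -/
def IsPotential (φ : E3 → ℝ) : Prop :=
  ContDiff ℝ 1 φ ∧ (∫⁻ x : E3, ENNReal.ofReal (‖gradient φ x‖ ^ 2)) < ⊤ ∧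
    ∀ a : ℝ, 0 < a → volume {x : E3 | a < |φ x|} < ⊤

/-- `f ∈ Γ^k_{M,J}`: `f` is measurable, a.e. nonnegative, with `‖f‖_{L¹} = M` and
`‖f‖_{L^{1+1/k}} ≤ J` (in particular `f ∈ L¹ ∩ L^{1+1/k}`). -/
def InGamma (k M J : ℝ) (f : E3 → E3 → ℝ) : Prop :=
  Measurable (Function.uncurry f) ∧
  (∀ᵐ z : E3 × E3, 0 ≤ f z.1 z.2) ∧
  (∫⁻ z : E3 × E3, ENNReal.ofReal (f z.1 z.2)) = ENNReal.ofReal M ∧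
  eLpNorm (Function.uncurry f) (ENNReal.ofReal (1 + 1/k)) volume ≤ ENNReal.ofReal J

/-- Kinetic energy `E_kin(f,φ) = ∫∫ √(e^{2φ(x)}+|p|²) f(x,p) dp dx` (value in `[0,∞]`). -/
def kinE (f : E3 → E3 → ℝ) (φ : E3 → ℝ) : ℝ≥0∞ :=
  ∫⁻ z : E3 × E3, ENNReal.ofReal (Real.sqrt (Real.exp (2 * φ z.1) + ‖z.2‖ ^ 2) * f z.1 z.2)

/-- Energy functional `𝓔(f,φ) = E_kin(f,φ) + (1/2)∫ |∇φ|²` (value in `[0,∞]`). -/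
def energy (f : E3 → E3 → ℝ) (φ : E3 → ℝ) : ℝ≥0∞ :=
  kinE f φ + (∫⁻ x : E3, ENNReal.ofReal (‖gradient φ x‖ ^ 2)) / 2

/-- `(f,φ)` is admissible: `f ∈ Γ^k_{M,J}`, `φ` is a potential and
`∫∫ √(1+|p|²) f dp dx < ∞`. -/
def Admissible (k M J : ℝ) (f : E3 → E3 → ℝ) (φ : E3 → ℝ) : Prop :=
  InGamma k M J f ∧ IsPotential φ ∧
  (∫⁻ z : E3 × E3, ENNReal.ofReal (Real.sqrt (1 + ‖z.2‖ ^ 2) * f z.1 z.2)) < ⊤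

/-- The energy infimum `I^k_{M,J} = inf {𝓔(f,φ) : (f,φ) admissible}`. -/
def energyInf (k M J : ℝ) : ℝ≥0∞ :=
  sInf { e : ℝ≥0∞ | ∃ f φ, Admissible k M J f φ ∧ e = energy f φ }

/-!
Trial state: the uniform density `ρ · 1` on `B_R × B_{1/4}` of total mass `M`, together with
the potential well `φ(x) = -2 e^{-|x|²/R²}`. On the support `e^{2φ} ≤ e^{-1}`, so every particle
has energy `√(e^{2φ} + |p|²) ≤ 3/4` and the kinetic part costs at most `3M/4`, while the field
energy is `O(R)`; with `R = M/512` the total is at most `7M/8`. The constraint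
`‖f‖_{1+1/k} ≤ J` holds as soon as `M^{1+k} ≤ J^{1+k} |B_R × B_{1/4}| ∼ M³`, which is true for
all large `M` precisely because `k < 2`.
-/

section GaussianWell

variable {F : Type*} [NormedAddCommGroup F]

def gaussianWell (R : ℝ) (x : F) : ℝ := -2 * exp (-‖x‖ ^ 2 / R ^ 2)

theorem sqrt_exp_two_mul_gaussianWell_add_sq_le {R : ℝ} {x p : F} (hx : ‖x‖ < R)
    (hp : ‖p‖ < 4⁻¹) :
    √(exp (2 * gaussianWell R x) + ‖p‖ ^ 2) ≤ 3 / 4 := by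
  have hR : 0 < R := (norm_nonneg x).trans_lt hx
  have hdepth : exp (-1) ≤ exp (-‖x‖ ^ 2 / R ^ 2) := by
    gcongr
    rw [neg_div, neg_le_neg_iff, div_le_one (by positivity)]
    gcongr
  have hwell : exp (2 * gaussianWell R x) ≤ exp (-1) := by
    unfold gaussianWell
    gcongr
    linarith [exp_neg_one_gt_d9]
  rw [sqrt_le_iff]
  constructor
  · norm_num
  · nlinarith [exp_neg_one_lt_d9, norm_nonneg p]

variable [InnerProductSpace ℝ F]

theorem contDiff_gaussianWell (R : ℝ) {n : WithTop ℕ∞} :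
    ContDiff ℝ n (gaussianWell (F := F) R) :=
  contDiff_const.mul (contDiff_exp.comp ((contDiff_norm_sq ℝ).neg.div_const _))

theorem hasFDerivAt_gaussianWell (R : ℝ) (x : F) :
    HasFDerivAt (gaussianWell R) ((4 / R ^ 2 * exp (-‖x‖ ^ 2 / R ^ 2)) • innerSL ℝ x) x := by
  have hexp : HasDerivAt (fun t : ℝ => -2 * exp (-t / R ^ 2))
      (-2 * (exp (-‖x‖ ^ 2 / R ^ 2) * (-1 / R ^ 2))) (‖x‖ ^ 2) :=
    (((hasDerivAt_id _).neg.div_const (R ^ 2)).exp).const_mul (-2)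
  refine (hexp.comp_hasFDerivAt x (hasStrictFDerivAt_norm_sq x).hasFDerivAt).congr_fderiv ?_
  ext y
  simp only [smul_apply, innerSL_apply_apply, smul_eq_mul, nsmul_eq_mul]
  ring

theorem norm_gradient_gaussianWell [CompleteSpace F] (R : ℝ) (x : F) :
    ‖gradient (gaussianWell R) x‖ = 4 / R ^ 2 * exp (-‖x‖ ^ 2 / R ^ 2) * ‖x‖ := by
  rw [gradient, LinearIsometryEquiv.norm_map, (hasFDerivAt_gaussianWell R x).fderiv, norm_smul,
    innerSL_apply_norm, Real.norm_of_nonneg (by positivity)]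

theorem sq_norm_gradient_gaussianWell_le [CompleteSpace F] (R : ℝ) (x : F) :
    ‖gradient (gaussianWell R) x‖ ^ 2 ≤ 16 / R ^ 2 * exp (-‖x‖ ^ 2 / R ^ 2) := by
  rcases eq_or_ne R 0 with rfl | hR
  · simp [norm_gradient_gaussianWell]
  set t := ‖x‖ ^ 2 / R ^ 2
  have hx : ‖x‖ ^ 2 = t * R ^ 2 := by simp only [t]; field_simp
  have ht : t * exp (-t) ≤ 1 := by
    rw [exp_neg, mul_inv_le_iff₀ (exp_pos t)]
    linarith [add_one_le_exp t]
  rw [norm_gradient_gaussianWell, neg_div]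
  calc (4 / R ^ 2 * exp (-t) * ‖x‖) ^ 2 = 16 / R ^ 2 * exp (-t) * (t * exp (-t)) := by
        rw [mul_pow, hx]; field_simp; ring
    _ ≤ 16 / R ^ 2 * exp (-t) := mul_le_of_le_one_right (by positivity) ht

end GaussianWell

theorem integrable_exp_neg_mul_sq_norm {V : Type*} [NormedAddCommGroup V] [InnerProductSpace ℝ V]
    [FiniteDimensional ℝ V] [MeasurableSpace V] [BorelSpace V] {b : ℝ} (hb : 0 < b) :
    Integrable (fun v : V => exp (-b * ‖v‖ ^ 2)) :=
  .of_integral_ne_zero <| by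
    rw [GaussianFourier.integral_rexp_neg_mul_sq_norm hb]; positivity

theorem lintegral_sq_norm_gradient_gaussianWell_le {R : ℝ} (hR : 0 < R) :
    ∫⁻ x : E3, ENNReal.ofReal (‖gradient (gaussianWell R) x‖ ^ 2) ≤ ENNReal.ofReal (128 * R) := by
  have hb : 0 < (R ^ 2)⁻¹ := by positivity
  have hgauss : ∫ x : E3, exp (-(R ^ 2)⁻¹ * ‖x‖ ^ 2) ≤ 8 * R ^ 3 := by
    rw [GaussianFourier.integral_rexp_neg_mul_sq_norm hb, finrank_euclideanSpace_fin,
      div_inv_eq_mul, show ((3 : ℕ) : ℝ) / 2 = 1 + 1 / 2 by norm_num,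
      rpow_add (by positivity), rpow_one, ← sqrt_eq_rpow, sqrt_mul pi_pos.le, sqrt_sq hR.le]
    have hsqrt : √π ≤ 2 := by
      rw [sqrt_le_iff]; constructor <;> linarith [pi_le_four]
    calc π * R ^ 2 * (√π * R) ≤ 4 * R ^ 2 * (2 * R) := by gcongr; exact pi_le_four
      _ = 8 * R ^ 3 := by ring
  calc ∫⁻ x : E3, ENNReal.ofReal (‖gradient (gaussianWell R) x‖ ^ 2)
      ≤ ∫⁻ x : E3, ENNReal.ofReal (16 / R ^ 2 * exp (-(R ^ 2)⁻¹ * ‖x‖ ^ 2)) := by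
        gcongr with x
        convert sq_norm_gradient_gaussianWell_le R x using 3
        ring
    _ = ENNReal.ofReal (16 / R ^ 2 * ∫ x : E3, exp (-(R ^ 2)⁻¹ * ‖x‖ ^ 2)) := by
        rw [← integral_const_mul, ofReal_integral_eq_lintegral_ofReal
          ((integrable_exp_neg_mul_sq_norm hb).const_mul _) (.of_forall fun _ => by positivity)]
    _ ≤ ENNReal.ofReal (128 * R) := by
        refine ENNReal.ofReal_le_ofReal ?_
        calc 16 / R ^ 2 * ∫ x : E3, exp (-(R ^ 2)⁻¹ * ‖x‖ ^ 2) ≤ 16 / R ^ 2 * (8 * R ^ 3) := by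
              gcongr
          _ = 128 * R := by field_simp; ring

theorem isPotential_gaussianWell {R : ℝ} (hR : 0 < R) : IsPotential (gaussianWell R) := by
  refine ⟨contDiff_gaussianWell R,
    (lintegral_sq_norm_gradient_gaussianWell_le hR).trans_lt ENNReal.ofReal_lt_top, fun a ha => ?_⟩
  have hint : Integrable (gaussianWell (F := E3) R) := by
    refine ((integrable_exp_neg_mul_sq_norm (V := E3) (b := (R ^ 2)⁻¹) (by positivity)).const_mul
      (-2)).congr (.of_forall fun x => ?_)
    simp only [gaussianWell]
    ring_nf
  simpa only [Real.norm_eq_abs] using hint.measure_norm_gt_lt_top ha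

section UniformDensity

variable {α : Type*} [MeasurableSpace α] {μ : Measure α} {S : Set α}

theorem lintegral_ofReal_indicator_const (hS : MeasurableSet S) (ρ : ℝ) :
    ∫⁻ z, ENNReal.ofReal (S.indicator (fun _ => ρ) z) ∂μ = ENNReal.ofReal ρ * μ S := by
  rw [← lintegral_indicator_const hS]
  congr with z
  by_cases hz : z ∈ S <;> simp [hz]

theorem lintegral_ofReal_mul_indicator_le {g : α → ℝ} {c ρ : ℝ} (hρ : 0 ≤ ρ)
    (hg : ∀ z ∈ S, g z ≤ c) :
    ∫⁻ z, ENNReal.ofReal (g z * S.indicator (fun _ => ρ) z) ∂μ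
      ≤ ENNReal.ofReal c * ∫⁻ z, ENNReal.ofReal (S.indicator (fun _ => ρ) z) ∂μ := by
  rw [← lintegral_const_mul' _ _ ENNReal.ofReal_ne_top]
  refine lintegral_mono fun z => ?_
  by_cases hz : z ∈ S
  · simp only [Set.indicator_of_mem hz, ← ENNReal.ofReal_mul' hρ]
    gcongr
    exact hg z hz
  · simp [hz]

end UniformDensity

theorem div_mul_rpow_le_of_rpow_le {k M J V : ℝ} (hk : 0 < k) (hM : 0 ≤ M) (hJ : 0 ≤ J)
    (hV : 0 < V) (h : M ^ (1 + k) ≤ J ^ (1 + k) * V) :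
    M / V * V ^ (k / (1 + k)) ≤ J := by
  have hk1 : 0 < 1 + k := by linarith
  have hsplit : V = V ^ (1 / (1 + k)) * V ^ (k / (1 + k)) := by
    rw [← rpow_add hV, ← add_div, div_self hk1.ne', rpow_one]
  have hroot : M ≤ J * V ^ (1 / (1 + k)) := by
    calc M = (M ^ (1 + k)) ^ (1 / (1 + k)) := by
          rw [← rpow_mul hM, mul_one_div_cancel hk1.ne', rpow_one]
      _ ≤ (J ^ (1 + k) * V) ^ (1 / (1 + k)) := by gcongr
      _ = J * V ^ (1 / (1 + k)) := by
        rw [mul_rpow (by positivity) hV.le, ← rpow_mul hJ, mul_one_div_cancel hk1.ne', rpow_one]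
  calc M / V * V ^ (k / (1 + k)) = M / V ^ (1 / (1 + k)) := by
        conv_lhs => enter [1, 2]; rw [hsplit]
        field_simp
    _ ≤ J := by rwa [div_le_iff₀ (by positivity)]

theorem eventually_rpow_le_const_mul_rpow {a b c : ℝ} (hab : a < b) (hc : 0 < c) :
    ∀ᶠ x : ℝ in atTop, x ^ a ≤ c * x ^ b := by
  filter_upwards [(tendsto_rpow_neg_atTop (sub_pos.2 hab)).eventually (gt_mem_nhds hc),
    eventually_gt_atTop 0] with x hx hx0
  calc x ^ a = x ^ (-(b - a)) * x ^ b := by rw [← rpow_add hx0]; ring_nf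
    _ ≤ c * x ^ b := by gcongr

def phaseBall (R : ℝ) : Set (E3 × E3) := Metric.ball 0 R ×ˢ Metric.ball 0 4⁻¹

theorem measurableSet_phaseBall (R : ℝ) : MeasurableSet (phaseBall R) :=
  measurableSet_ball.prod measurableSet_ball

theorem volume_phaseBall {R : ℝ} (hR : 0 ≤ R) :
    volume (phaseBall R) = ENNReal.ofReal (R ^ 3) * volume (phaseBall 1) := by
  simp only [phaseBall, Measure.volume_eq_prod, Measure.prod_prod,
    Measure.addHaar_ball volume (0 : E3) hR, finrank_euclideanSpace_fin, mul_assoc]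

theorem volume_phaseBall_ne_zero {R : ℝ} (hR : 0 < R) : volume (phaseBall R) ≠ 0 := by
  simp only [phaseBall, Measure.volume_eq_prod, Measure.prod_prod]
  exact mul_ne_zero (Metric.measure_ball_pos _ _ hR).ne'
    (Metric.measure_ball_pos _ _ (by norm_num)).ne'

theorem volume_phaseBall_ne_top (R : ℝ) : volume (phaseBall R) ≠ ⊤ := by
  simp only [phaseBall, Measure.volume_eq_prod, Measure.prod_prod]
  exact ENNReal.mul_ne_top measure_ball_lt_top.ne measure_ball_lt_top.ne

theorem inGamma_curry_indicator {k M J : ℝ} (hk : 0 < k) (hM : 0 ≤ M) (hJ : 0 ≤ J)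
    {S : Set (E3 × E3)} (hS : MeasurableSet S) (hS0 : volume S ≠ 0) (hStop : volume S ≠ ⊤)
    (hLp : M ^ (1 + k) ≤ J ^ (1 + k) * (volume S).toReal) :
    InGamma k M J (Function.curry (S.indicator fun _ => M / (volume S).toReal)) := by
  set V := (volume S).toReal
  have hV : 0 < V := ENNReal.toReal_pos hS0 hStop
  have hSV : volume S = ENNReal.ofReal V := (ENNReal.ofReal_toReal hStop).symm
  have hq : (ENNReal.ofReal (1 + 1 / k)).toReal = 1 + 1 / k := ENNReal.toReal_ofReal (by positivity)
  refine ⟨by rw [Function.uncurry_curry]; exact measurable_const.indicator hS,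
    .of_forall fun z => Set.indicator_nonneg (fun _ _ => by positivity) z, ?_, ?_⟩
  · refine (lintegral_ofReal_indicator_const hS (M / V)).trans ?_
    rw [hSV, ← ENNReal.ofReal_mul (by positivity),
      div_mul_cancel₀ _ hV.ne']
  · rw [Function.uncurry_curry]
    refine (eLpNorm_indicator_const_le _ _).trans ?_
    rw [hq, hSV, enorm_eq_ofReal (by positivity),
      ENNReal.ofReal_rpow_of_nonneg hV.le (by positivity), ← ENNReal.ofReal_mul (by positivity),
      show 1 / (1 + 1 / k) = k / (1 + k) by field_simp; ring]
    exact ENNReal.ofReal_le_ofReal (div_mul_rpow_le_of_rpow_le hk hM hJ hV hLp)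

theorem energyInf_lt_of_rpow_le {k M J : ℝ} (hk : 0 < k) (hJ : 0 < J) (hM : 0 < M)
    (hLp : M ^ (1 + k) ≤ J ^ (1 + k) * (volume (phaseBall (M / 512))).toReal) :
    energyInf k M J < ENNReal.ofReal M := by
  set R := M / 512
  have hR : 0 < R := by positivity
  have hf := inGamma_curry_indicator hk hM.le hJ.le (measurableSet_phaseBall R)
    (volume_phaseBall_ne_zero hR) (volume_phaseBall_ne_top R) hLp
  set ρ := M / (volume (phaseBall R)).toReal
  set f := Function.curry ((phaseBall R).indicator fun _ => ρ)
  have hρ : 0 ≤ ρ := by positivity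
  have hmass : ∫⁻ z : E3 × E3, ENNReal.ofReal (f z.1 z.2) = ENNReal.ofReal M := hf.2.2.1
  have hkin : kinE f (gaussianWell R) ≤ ENNReal.ofReal (3 / 4) * ENNReal.ofReal M :=
    hmass ▸ lintegral_ofReal_mul_indicator_le hρ fun z hz =>
      sqrt_exp_two_mul_gaussianWell_add_sq_le (mem_ball_zero_iff.1 hz.1) (mem_ball_zero_iff.1 hz.2)
  have hmoment : ∫⁻ z : E3 × E3, ENNReal.ofReal (√(1 + ‖z.2‖ ^ 2) * f z.1 z.2)
      ≤ ENNReal.ofReal 2 * ENNReal.ofReal M :=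
    hmass ▸ lintegral_ofReal_mul_indicator_le hρ fun z hz => by
      have hp : ‖z.2‖ < 4⁻¹ := mem_ball_zero_iff.1 hz.2
      rw [sqrt_le_iff]
      constructor
      · norm_num
      · nlinarith [norm_nonneg z.2]
  have hadm : Admissible k M J f (gaussianWell R) :=
    ⟨hf, isPotential_gaussianWell hR, hmoment.trans_lt (by finiteness)⟩
  calc energyInf k M J ≤ energy f (gaussianWell R) := sInf_le ⟨f, _, hadm, rfl⟩
    _ ≤ ENNReal.ofReal (3 / 4) * ENNReal.ofReal M + ENNReal.ofReal (128 * R) / 2 :=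
        add_le_add hkin (by gcongr; exact lintegral_sq_norm_gradient_gaussianWell_le hR)
    _ = ENNReal.ofReal (3 / 4 * M + 128 * R / 2) := by
        rw [ENNReal.ofReal_add (by positivity) (by positivity),
          ENNReal.ofReal_mul (p := 3 / 4) (by norm_num), ENNReal.ofReal_div_of_pos two_pos,
          ENNReal.ofReal_ofNat]
    _ < ENNReal.ofReal M := (ENNReal.ofReal_lt_ofReal_iff hM).2 (by simp only [R]; linarith)

/-- for all `0 < k < 2` and `J > 0` there is `M₀ ∈ [0,∞)` such that
`I^k_{M,J} < M` for every `M > M₀`. -/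
theorem energyInf_lt_mass_for_large_mass (k J : ℝ) (hk : 0 < k) (hk2 : k < 2) (hJ : 0 < J) :
    ∃ M₀ : ℝ, 0 ≤ M₀ ∧ ∀ M : ℝ, M₀ < M → energyInf k M J < ENNReal.ofReal M := by
  set V₁ := (volume (phaseBall 1)).toReal
  have hV₁ : 0 < V₁ :=
    ENNReal.toReal_pos (volume_phaseBall_ne_zero one_pos) (volume_phaseBall_ne_top 1)
  have hlarge : ∀ᶠ M in atTop,
      0 < M ∧ M ^ (1 + k) ≤ J ^ (1 + k) * (volume (phaseBall (M / 512))).toReal := by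
    filter_upwards [eventually_gt_atTop 0, eventually_rpow_le_const_mul_rpow (a := 1 + k) (b := 3)
      (c := J ^ (1 + k) * V₁ / 512 ^ 3) (by linarith) (by positivity)] with M hM hLp
    refine ⟨hM, hLp.trans_eq ?_⟩
    rw [volume_phaseBall (by positivity), ENNReal.toReal_mul,
      ENNReal.toReal_ofReal (by positivity), show (3 : ℝ) = (3 : ℕ) by norm_num, rpow_natCast]
    ring
  obtain ⟨M₀, hM₀⟩ := eventually_atTop.1 hlarge
  refine ⟨max M₀ 0, le_max_right _ _, fun M hM => ?_⟩
  obtain ⟨hMpos, hLp⟩ := hM₀ M ((le_max_left _ _).trans hM.le)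
  exact energyInf_lt_of_rpow_le hk hJ hMpos hLp
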